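/- Let K be a field, and let λ₀ = 1, λ₁, …, λ_{n-2} ∈ K \ {0} be pairwise distinct. Let I ⊂ K[x₀,…,x_n] be the ideal generated by f_i = λ_i x₀^k + x₁^k + x_{i+2}^k for 0 ≤ i ≤ n-2, where k ≥ 1 and char K does not divide k. If a point P = [x₀ : ⋯ : x_n] of the projective variety V(I) has x_i = x_j = 0 for some i ≠ j, then x_t = 0 for all t, i.e., no point of projective space lies on the variety with two vanishing coordinates. -/

import Mathlib

/-!
Each equation `λᵢ x₀ᵏ + x₁ᵏ + x_{i+2}ᵏ = 0` has three terms with nonzero coefficients, so two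
vanishing coordinates among `x₀, x₁, x_{i+2}` force the third to vanish. If the two given
coordinates are `x_{a+2}` and `x_{b+2}`, subtracting their equations leaves
`(λ_a - λ_b) x₀ᵏ = 0`, so `x₀ = 0` since the `λ` are distinct, and then `x₁ = 0`. Once
`x₀ = x₁ = 0`, every equation forces `x_{i+2} = 0`.
-/

section ThreeTerm

variable {R : Type*} [CommRing R] [NoZeroDivisors R] {k : ℕ} {a b u v w w' : R}

theorem eq_zero_of_mul_pow_add_pow_add_pow_of_left_of_mid (hk : k ≠ 0)
    (h : a * u ^ k + v ^ k + w ^ k = 0) (hu : u = 0) (hv : v = 0) : w = 0 := by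
  subst hu hv
  simpa [zero_pow hk, hk] using h

theorem eq_zero_of_mul_pow_add_pow_add_pow_of_left_of_right (hk : k ≠ 0)
    (h : a * u ^ k + v ^ k + w ^ k = 0) (hu : u = 0) (hw : w = 0) : v = 0 := by
  subst hu hw
  simpa [zero_pow hk, hk] using h

theorem eq_zero_of_mul_pow_add_pow_add_pow_of_mid_of_right (hk : k ≠ 0) (ha : a ≠ 0)
    (h : a * u ^ k + v ^ k + w ^ k = 0) (hv : v = 0) (hw : w = 0) : u = 0 := by
  subst hv hw
  simpa [zero_pow hk, hk, ha] using h

theorem eq_zero_of_mul_pow_add_pow_add_pow_of_ne (hk : k ≠ 0) (hab : a ≠ b)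
    (h : a * u ^ k + v ^ k + w ^ k = 0) (h' : b * u ^ k + v ^ k + w' ^ k = 0)
    (hw : w = 0) (hw' : w' = 0) : u = 0 := by
  subst hw hw'
  have hdiff : (a - b) * u ^ k = 0 := by linear_combination h - h'
  simpa [sub_eq_zero, hab, hk] using hdiff

end ThreeTerm

section GeneralizedFermat

variable {R : Type*} [CommRing R] [NoZeroDivisors R] {n k : ℕ} {lam x : ℕ → R}

theorem forall_eq_zero_of_zero_of_one (hk : k ≠ 0)
    (hcurve : ∀ i ≤ n - 2, lam i * x 0 ^ k + x 1 ^ k + x (i + 2) ^ k = 0)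
    (h0 : x 0 = 0) (h1 : x 1 = 0) : ∀ t ≤ n, x t = 0
  | 0, _ => h0
  | 1, _ => h1
  | m + 2, hm => eq_zero_of_mul_pow_add_pow_add_pow_of_left_of_mid hk (hcurve m (by omega)) h0 h1

theorem zero_and_one_eq_zero_of_two_eq_zero (hk : k ≠ 0) (hlam : ∀ i ≤ n - 2, lam i ≠ 0)
    (hdist : ∀ i ≤ n - 2, ∀ j ≤ n - 2, i ≠ j → lam i ≠ lam j)
    (hcurve : ∀ i ≤ n - 2, lam i * x 0 ^ k + x 1 ^ k + x (i + 2) ^ k = 0)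
    {i j : ℕ} (hi : i ≤ n) (hj : j ≤ n) (hij : i < j) (hxi : x i = 0) (hxj : x j = 0) :
    x 0 = 0 ∧ x 1 = 0 := by
  match i, j, hij with
  | 0, 1, _ => exact ⟨hxi, hxj⟩
  | 0, b + 2, _ =>
    exact ⟨hxi, eq_zero_of_mul_pow_add_pow_add_pow_of_left_of_right hk
      (hcurve b (by omega)) hxi hxj⟩
  | 1, b + 2, _ =>
    exact ⟨eq_zero_of_mul_pow_add_pow_add_pow_of_mid_of_right hk (hlam b (by omega))
      (hcurve b (by omega)) hxi hxj, hxi⟩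
  | a + 2, b + 2, hab =>
    have h0 : x 0 = 0 := eq_zero_of_mul_pow_add_pow_add_pow_of_ne hk
      (hdist a (by omega) b (by omega) (by omega)) (hcurve a (by omega)) (hcurve b (by omega))
      hxi hxj
    exact ⟨h0, eq_zero_of_mul_pow_add_pow_add_pow_of_left_of_right hk
      (hcurve a (by omega)) h0 hxi⟩

end GeneralizedFermat

theorem stmt_6_general (K : Type*) [Field K] (n k : ℕ) (hk : 1 ≤ k)
    (lam : ℕ → K) (hlamne : ∀ i ≤ n - 2, lam i ≠ 0)
    (hdist : ∀ i ≤ n - 2, ∀ j ≤ n - 2, i ≠ j → lam i ≠ lam j)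
    (x : ℕ → K)
    (hcurve : ∀ i ≤ n - 2, lam i * (x 0) ^ k + (x 1) ^ k + (x (i + 2)) ^ k = 0)
    (i j : ℕ) (hi : i ≤ n) (hj : j ≤ n) (hij : i ≠ j) (hxi : x i = 0) (hxj : x j = 0) :
    ∀ t ≤ n, x t = 0 := by
  have hk0 : k ≠ 0 := by omega
  obtain ⟨h0, h1⟩ : x 0 = 0 ∧ x 1 = 0 := by
    rcases hij.lt_or_gt with hlt | hgt
    · exact zero_and_one_eq_zero_of_two_eq_zero hk0 hlamne hdist hcurve hi hj hlt hxi hxj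
    · exact zero_and_one_eq_zero_of_two_eq_zero hk0 hlamne hdist hcurve hj hi hgt hxj hxi
  exact forall_eq_zero_of_zero_of_one hk0 hcurve h0 h1

/-- Let `K` be a field, `λ₀ = 1, λ₁, …, λ_{n-2} ∈ K \ {0}` pairwise distinct, and let
`F_{k,n}` be defined by the equations `f_i = λ_i x₀^k + x₁^k + x_{i+2}^k` (`0 ≤ i ≤ n-2`),
where `k ≥ 1` and `char K ∤ k`. If a point `[x₀ : ⋯ : x_n]` of the variety has
`x_i = x_j = 0` for some `i ≠ j`, then `x_t = 0` for all `t`; i.e. no point of projective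
space lies on the variety with two vanishing coordinates. -/
theorem stmt_6 (K : Type*) [Field K] (n k : ℕ) (hn : 2 ≤ n) (hk : 1 ≤ k)
    (hchar : (k : K) ≠ 0)
    (lam : ℕ → K) (hlam0 : lam 0 = 1) (hlamne : ∀ i ≤ n - 2, lam i ≠ 0)
    (hdist : ∀ i ≤ n - 2, ∀ j ≤ n - 2, i ≠ j → lam i ≠ lam j)
    (x : ℕ → K)
    (hcurve : ∀ i ≤ n - 2, lam i * (x 0) ^ k + (x 1) ^ k + (x (i + 2)) ^ k = 0)
    (i j : ℕ) (hi : i ≤ n) (hj : j ≤ n) (hij : i ≠ j) (hxi : x i = 0) (hxj : x j = 0) :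
    ∀ t ≤ n, x t = 0 :=
  stmt_6_general K n k hk lam hlamne hdist x hcurve i j hi hj hij hxi hxj
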